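/- arXiv:1606.00428 — 3 statements merged into one kernel-verified Lean document; each statement's English description precedes it below -/
import Mathlib

section
/- Let H be a hypergroupoid and f a fuzzy subset of H. Then f is a fuzzy right ideal of H if and only if f∘1 ≼ f. -/
/-- A hypergroupoid structure on a type `H`: a hyperoperation assigning to each
pair of elements a nonempty subset of `H`. -/
structure Hypergroupoid (H : Type*) where
  hmul : H → H → Set H
  hmul_nonempty : ∀ a b, (hmul a b).Nonempty

namespace Hypergroupoid

variable {H : Type*}

/-- The induced operation on subsets: `A*B = ⋃_{(a,b) ∈ A×B} (a∘b)`. -/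
def setMul (M : Hypergroupoid H) (A B : Set H) : Set H :=
  ⋃ p ∈ A ×ˢ B, M.hmul p.1 p.2

/-- A fuzzy subset of `H` is a map `H → [0,1]` (here: a real-valued map with
values in `[0,1]`). -/
def IsFuzzy (f : H → ℝ) : Prop := ∀ x, f x ∈ Set.Icc (0 : ℝ) 1

open Classical in
/-- The product `f∘g` of two fuzzy subsets:
`(f∘g)(a) = ⋁_{(y,z) ∈ A_a} min (f y) (g z)` if `A_a ≠ ∅`, and `0` otherwise,
where `A_a = {(y,z) | a ∈ y∘z}`. -/
noncomputable def fcomp (M : Hypergroupoid H) (f g : H → ℝ) (a : H) : ℝ :=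
  if {p : H × H | a ∈ M.hmul p.1 p.2}.Nonempty then
    sSup {r : ℝ | ∃ y z, a ∈ M.hmul y z ∧ r = min (f y) (g z)}
  else 0

/-- The constant fuzzy subset `1`. -/
def one : H → ℝ := fun _ => 1

/-- A hypergroupoid is a hypersemigroup if `(x∘y)*{z} = {x}*(y∘z)` for all `x,y,z`. -/
def IsHypersemigroup (M : Hypergroupoid H) : Prop :=
  ∀ x y z : H, M.setMul (M.hmul x y) {z} = M.setMul {x} (M.hmul y z)

/-- `f` is a fuzzy right ideal: `u ∈ x∘y → f u ≥ f x`. -/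
def IsFuzzyRightIdeal (M : Hypergroupoid H) (f : H → ℝ) : Prop :=
  ∀ x y u : H, u ∈ M.hmul x y → f x ≤ f u

/-- `f` is a fuzzy left ideal: `u ∈ x∘y → f u ≥ f y`. -/
def IsFuzzyLeftIdeal (M : Hypergroupoid H) (f : H → ℝ) : Prop :=
  ∀ x y u : H, u ∈ M.hmul x y → f y ≤ f u

/-- `f` is a fuzzy quasi-ideal: `x ∈ b∘s` and `x ∈ t∘c` imply `f x ≥ min (f b) (f c)`. -/
def IsFuzzyQuasiIdeal (M : Hypergroupoid H) (f : H → ℝ) : Prop :=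
  ∀ x b s t c : H, x ∈ M.hmul b s → x ∈ M.hmul t c → min (f b) (f c) ≤ f x

/-- `f` is a fuzzy bi-ideal: `u ∈ (x∘y)*{z} → f u ≥ min (f x) (f z)`. -/
def IsFuzzyBiIdeal (M : Hypergroupoid H) (f : H → ℝ) : Prop :=
  ∀ x y z u : H, u ∈ M.setMul (M.hmul x y) {z} → min (f x) (f z) ≤ f u

end Hypergroupoid

open Hypergroupoid

/-- `f` is a fuzzy right ideal of `H` iff `f∘1 ≼ f`. -/
theorem fuzzyRightIdeal_iff {H : Type*} [Nonempty H] (M : Hypergroupoid H)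
    (f : H → ℝ) (hf : IsFuzzy f) :
    M.IsFuzzyRightIdeal f ↔ ∀ x : H, M.fcomp f Hypergroupoid.one x ≤ f x := by
  constructor
  · intro h a
    unfold fcomp
    split_ifs with hne
    · apply Real.sSup_le
      · rintro r ⟨y, z, hyz, rfl⟩
        have : min (f y) (Hypergroupoid.one z) = f y := by
          simp [Hypergroupoid.one, min_eq_left (hf y).2]
        rw [this]
        exact h y z a hyz
      · exact (hf a).1
    · exact (hf a).1
  · intro h x y u hu
    have hbdd : BddAbove {r : ℝ | ∃ y z, u ∈ M.hmul y z ∧ r = min (f y) (Hypergroupoid.one z)} := by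
      refine ⟨1, ?_⟩
      rintro r ⟨a, b, hab, rfl⟩
      exact min_le_of_right_le le_rfl
    have hle : f x ≤ M.fcomp f Hypergroupoid.one u := by
      unfold fcomp
      rw [if_pos ⟨(x, y), hu⟩]
      have hmem : f x ∈ {r : ℝ | ∃ a b, u ∈ M.hmul a b ∧ r = min (f a) (Hypergroupoid.one b)} :=
        ⟨x, y, hu, by simp [Hypergroupoid.one, min_eq_left (hf x).2]⟩
      exact le_csSup hbdd hmem
    exact hle.trans (h u)
end

section
/- Let H be a hypersemigroup. Then the product of fuzzy subsets of H is associative: for all fuzzy subsets f, g, h of H, (f∘g)∘h = f∘(g∘h); consequently the set of all fuzzy subsets of H, under this product, is a semigroup. -/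
open Hypergroupoid

section Aux

variable {H : Type*} (M : Hypergroupoid H)

private lemma aux_bdd (f g : H → ℝ) (hf : IsFuzzy f) (a : H) :
    BddAbove {r : ℝ | ∃ y z, a ∈ M.hmul y z ∧ r = min (f y) (g z)} := by
  refine ⟨1, fun r hr => ?_⟩
  obtain ⟨y, z, _, rfl⟩ := hr
  exact le_trans (min_le_left _ _) (hf y).2

private lemma aux_mem_le (f g : H → ℝ) (hf : IsFuzzy f) {a y z : H}
    (hm : a ∈ M.hmul y z) : min (f y) (g z) ≤ M.fcomp f g a := by
  rw [fcomp, if_pos ⟨(y, z), hm⟩]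
  exact le_csSup (aux_bdd M f g hf a) ⟨y, z, hm, rfl⟩

private lemma aux_fuzzy (f g : H → ℝ) (hf : IsFuzzy f) (hg : IsFuzzy g) :
    IsFuzzy (M.fcomp f g) := by
  intro a
  rw [fcomp]
  split
  · rename_i hne
    obtain ⟨⟨y, z⟩, hm⟩ := hne
    constructor
    · refine le_trans ?_ (le_csSup (aux_bdd M f g hf a) ⟨y, z, hm, rfl⟩)
      exact le_min (hf y).1 (hg z).1
    · refine csSup_le ⟨_, y, z, hm, rfl⟩ fun r hr => ?_
      obtain ⟨y', z', _, rfl⟩ := hr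
      exact le_trans (min_le_left _ _) (hf y').2
  · exact ⟨le_refl 0, zero_le_one⟩

/-- One inequality of associativity. -/
private lemma aux_assoc_le (hM : M.IsHypersemigroup) (f g h : H → ℝ)
    (hf : IsFuzzy f) (hg : IsFuzzy g) (hh : IsFuzzy h) (a : H) :
    M.fcomp (M.fcomp f g) h a ≤ M.fcomp f (M.fcomp g h) a := by
  have hG : IsFuzzy (M.fcomp g h) := aux_fuzzy M g h hg hh
  have hFG : IsFuzzy (M.fcomp f (M.fcomp g h)) := aux_fuzzy M f _ hf hG
  rw [fcomp]
  split
  · rename_i hne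
    refine csSup_le ⟨_, hne.choose.1, hne.choose.2, hne.choose_spec, rfl⟩
      fun r hr => ?_
    obtain ⟨u, z, hm, rfl⟩ := hr
    -- r = min (fcomp f g u) (h z), a ∈ u∘z
    rw [fcomp]
    split
    · rename_i hneu
      refine le_of_forall_pos_le_add fun ε hε => ?_
      have hbdd := aux_bdd M f g hf u
      have hne' : {r : ℝ | ∃ y z', u ∈ M.hmul y z' ∧ r = min (f y) (g z')}.Nonempty :=
        ⟨_, hneu.choose.1, hneu.choose.2, hneu.choose_spec, rfl⟩
      obtain ⟨t, ht, hlt⟩ := exists_lt_of_lt_csSup hne'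
        (show sSup _ - ε < sSup _ by linarith)
      obtain ⟨x, y, hxy, rfl⟩ := ht
      -- a ∈ u∘z, u ∈ x∘y, so a ∈ (x∘y)*{z} = {x}*(y∘z)
      have ha : a ∈ M.setMul (M.hmul x y) {z} := by
        simp only [setMul, Set.mem_iUnion]
        exact ⟨(u, z), ⟨hxy, rfl⟩, hm⟩
      rw [hM x y z] at ha
      simp only [setMul, Set.mem_iUnion] at ha
      obtain ⟨⟨x1, v⟩, ⟨hx1, hv⟩, hav⟩ := ha
      rw [Set.mem_singleton_iff] at hx1
      rw [hx1] at hav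
      have h1 : min (g y) (h z) ≤ M.fcomp g h v := aux_mem_le M g h hg hv
      have h2 : min (f x) (M.fcomp g h v) ≤ M.fcomp f (M.fcomp g h) a :=
        aux_mem_le M f _ hf hav
      have h3 : min (min (f x) (g y)) (h z) ≤ M.fcomp f (M.fcomp g h) a := by
        rw [min_assoc]
        exact le_trans (min_le_min (le_refl _) h1) h2
      have h4 : sSup {r : ℝ | ∃ y z', u ∈ M.hmul y z' ∧ r = min (f y) (g z')}
          ≤ min (f x) (g y) + ε := by linarith
      calc min (sSup _) (h z) ≤ min (min (f x) (g y) + ε) (h z) :=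
            min_le_min h4 (le_refl _)
        _ ≤ min (min (f x) (g y) + ε) (h z + ε) :=
            min_le_min (le_refl _) (le_add_of_nonneg_right hε.le)
        _ = min (min (f x) (g y)) (h z) + ε := min_add_add_right _ _ _
        _ ≤ M.fcomp f (M.fcomp g h) a + ε := by linarith
    · rw [min_eq_left (hh z).1]
      exact (hFG a).1
  · exact (hFG a).1

/-- The opposite hypergroupoid. -/
private def opM : Hypergroupoid H :=
  ⟨fun a b => M.hmul b a, fun a b => M.hmul_nonempty b a⟩

private lemma opM_fcomp (f g : H → ℝ) (a : H) :
    (opM M).fcomp f g a = M.fcomp g f a := by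
  rw [fcomp, fcomp]
  have e1 : {p : H × H | a ∈ (opM M).hmul p.1 p.2}.Nonempty ↔
      {p : H × H | a ∈ M.hmul p.1 p.2}.Nonempty := by
    constructor
    · rintro ⟨⟨y, z⟩, hp⟩; exact ⟨(z, y), hp⟩
    · rintro ⟨⟨y, z⟩, hp⟩; exact ⟨(z, y), hp⟩
  have e2 : {r : ℝ | ∃ y z, a ∈ (opM M).hmul y z ∧ r = min (f y) (g z)} =
      {r : ℝ | ∃ y z, a ∈ M.hmul y z ∧ r = min (g y) (f z)} := by
    ext r
    constructor
    · rintro ⟨y, z, hm, rfl⟩; exact ⟨z, y, hm, (min_comm _ _)⟩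
    · rintro ⟨y, z, hm, rfl⟩; exact ⟨z, y, hm, (min_comm _ _)⟩
  split <;> split <;> first
    | rfl
    | (rename_i h1 h2; exact absurd (e1.mpr h2) h1)
    | (rename_i h1 h2; exact absurd (e1.mp h1) h2)
    | rw [e2]

private lemma opM_setMul (A B : Set H) : (opM M).setMul A B = M.setMul B A := by
  ext w
  simp only [setMul, opM, Set.mem_iUnion, Set.mem_prod]
  constructor
  · rintro ⟨⟨p1, p2⟩, ⟨h1, h2⟩, hw⟩
    exact ⟨(p2, p1), ⟨h2, h1⟩, hw⟩
  · rintro ⟨⟨p1, p2⟩, ⟨h1, h2⟩, hw⟩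
    exact ⟨(p2, p1), ⟨h2, h1⟩, hw⟩

private lemma opM_hsg (hM : M.IsHypersemigroup) : (opM M).IsHypersemigroup := by
  intro x y z
  rw [show (opM M).hmul x y = M.hmul y x from rfl,
    show (opM M).hmul y z = M.hmul z y from rfl, opM_setMul, opM_setMul]
  exact (hM z y x).symm

end Aux

/-- in a hypersemigroup, the product of fuzzy subsets is associative
(hence the fuzzy subsets of `H` form a semigroup under this product). -/
theorem fcomp_assoc {H : Type*} [Nonempty H] (M : Hypergroupoid H)
    (hM : M.IsHypersemigroup) (f g h : H → ℝ)
    (hf : IsFuzzy f) (hg : IsFuzzy g) (hh : IsFuzzy h) :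
    M.fcomp (M.fcomp f g) h = M.fcomp f (M.fcomp g h) := by
  funext a
  refine le_antisymm (aux_assoc_le M hM f g h hf hg hh a) ?_
  have key := aux_assoc_le (opM M) (opM_hsg M hM) h g f hh hg hf a
  have e1 : (opM M).fcomp ((opM M).fcomp h g) f a
      = M.fcomp f (M.fcomp g h) a := by
    rw [opM_fcomp]
    congr 1
    funext u
    exact opM_fcomp M h g u
  have e2 : (opM M).fcomp h ((opM M).fcomp g f) a
      = M.fcomp (M.fcomp f g) h a := by
    rw [opM_fcomp]
    congr 1
    funext u
    exact opM_fcomp M g f u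
  rw [e1, e2] at key
  exact key
end

section
/- Let H be a hypersemigroup and f a fuzzy subset of H. Then f is a fuzzy bi-ideal of H if and only if f∘1∘f ≼ f. -/
open Hypergroupoid

/-- `f` is a fuzzy bi-ideal of the hypersemigroup `H` iff `f∘1∘f ≼ f`. -/
theorem fuzzyBiIdeal_iff {H : Type*} [Nonempty H] (M : Hypergroupoid H)
    (hM : M.IsHypersemigroup) (f : H → ℝ) (hf : IsFuzzy f) :
    M.IsFuzzyBiIdeal f ↔
      ∀ x : H, M.fcomp (M.fcomp f Hypergroupoid.one) f x ≤ f x := by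
  set g : H → ℝ := M.fcomp f Hypergroupoid.one with hg
  have hf0 : ∀ x, (0:ℝ) ≤ f x := fun x => (hf x).1
  have hf1 : ∀ x, f x ≤ 1 := fun x => (hf x).2
  -- membership in setMul (hmul x y) {z}
  have hmem : ∀ x y z u : H, u ∈ M.setMul (M.hmul x y) {z} ↔
      ∃ w, w ∈ M.hmul x y ∧ u ∈ M.hmul w z := by
    intro x y z u
    simp [Hypergroupoid.setMul, Set.mem_iUnion]
  have hg_ge : ∀ x y w : H, w ∈ M.hmul x y → f x ≤ g w := by
    intro x y w hw
    rw [hg, Hypergroupoid.fcomp, if_pos ⟨(x, y), hw⟩]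
    have hbdd : BddAbove {r : ℝ | ∃ a b, w ∈ M.hmul a b ∧ r = min (f a) (Hypergroupoid.one b)} := by
      refine ⟨1, ?_⟩
      rintro r ⟨a, b, _, rfl⟩
      exact le_trans (min_le_left _ _) (hf1 a)
    have hmemT : f x ∈ {r : ℝ | ∃ a b, w ∈ M.hmul a b ∧ r = min (f a) (Hypergroupoid.one b)} :=
      ⟨x, y, hw, by simp [Hypergroupoid.one, min_eq_left (hf1 x)]⟩
    exact le_csSup hbdd hmemT
  constructor
  · intro hbi x
    rw [Hypergroupoid.fcomp]
    split_ifs with h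
    · refine Real.sSup_le ?_ (hf0 x)
      rintro r ⟨p, q, hx, rfl⟩
      -- need min (g p) (f q) ≤ f x
      by_cases hq : f q ≤ f x
      · exact le_trans (min_le_right _ _) hq
      · push_neg at hq
        refine le_trans (min_le_left _ _) ?_
        rw [hg, Hypergroupoid.fcomp]
        split_ifs with h2
        · refine Real.sSup_le ?_ (hf0 x)
          rintro r ⟨a, b, hp, rfl⟩
          have := hbi a b q x ((hmem a b q x).2 ⟨p, hp, hx⟩)
          have hmin : min (f a) (f q) ≤ f x := this
          rcases min_cases (f a) (f q) with ⟨he, _⟩ | ⟨he, _⟩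
          · rw [he] at hmin
            exact le_trans (min_le_left _ _) hmin
          · rw [he] at hmin; exact absurd hmin (not_le.2 hq)
        · exact hf0 x
    · exact hf0 x
  · intro hle x y z u hu
    obtain ⟨w, hw, hu'⟩ := (hmem x y z u).1 hu
    refine le_trans ?_ (hle u)
    rw [Hypergroupoid.fcomp, if_pos ⟨(w, z), hu'⟩]
    have hbdd : BddAbove {r : ℝ | ∃ a b, u ∈ M.hmul a b ∧ r = min (g a) (f b)} := by
      refine ⟨1, ?_⟩
      rintro r ⟨a, b, _, rfl⟩
      exact le_trans (min_le_right _ _) (hf1 b)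
    have hmemS : min (g w) (f z) ∈ {r : ℝ | ∃ a b, u ∈ M.hmul a b ∧ r = min (g a) (f b)} :=
      ⟨w, z, hu', rfl⟩
    calc min (f x) (f z) ≤ min (g w) (f z) := min_le_min (hg_ge x y w hw) le_rfl
      _ ≤ _ := le_csSup hbdd hmemS
end
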